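/- arXiv:1305.0162 — 2 statements merged into one kernel-verified Lean document; each statement's English description precedes it below -/
import Mathlib

section
/- For every positive integer ℓ, the following identity holds in ℚ(β)[[x]]: ((1 - x^(2ℓ)) / D)² = (Σ_{s=0}^{∞} χ_s(β) x^s) · (Σ_{k=1}^{ℓ} (x^(2ℓ-2k) - x^(2ℓ+2k-2))) / D, where D = (1 - x)(1 - xβ²)(1 - xβ⁻²) and χ_s(β) = Σ_{j=-s}^{s} β^(2j). -/
open scoped BigOperators

/-- The transcendental variable `β` of the field `ℚ(β)` of rational functions. -/
noncomputable def β : RatFunc ℚ := RatFunc.X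

/-- The SU(2) character of the spin-`s` representation: `χ_s(β) = Σ_{j=-s}^{s} β^(2j)`. -/
noncomputable def χ (s : ℕ) : RatFunc ℚ :=
  ∑ j ∈ Finset.Icc (-(s : ℤ)) (s : ℤ), β ^ (2 * j)

lemma beta_ne : (β : RatFunc ℚ) ≠ 0 := RatFunc.X_ne_zero
lemma q_ne : (β^2 : RatFunc ℚ) ≠ 0 := pow_ne_zero 2 beta_ne

lemma q_sub_one_ne : (β^2 : RatFunc ℚ) - 1 ≠ 0 := by
  unfold β
  intro h
  have h2 : (RatFunc.X : RatFunc ℚ)^2 = 1 := by linear_combination h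
  rw [← map_one (algebraMap (Polynomial ℚ) (RatFunc ℚ)), RatFunc.X, ← map_pow] at h2
  have := IsFractionRing.injective (Polynomial ℚ) (RatFunc ℚ) h2
  simpa using congrArg Polynomial.natDegree this

lemma pow2 (j : ℤ) : (β : RatFunc ℚ)^(2*j) = (β^2)^j := by
  rw [zpow_mul]; norm_cast

lemma chi_succ (s : ℕ) :
    χ (s+1) = χ s + (β^2)^((s:ℤ)+1) + (β^2)^(-((s:ℤ)+1)) := by
  unfold χ
  have hset : Finset.Icc (-((s:ℤ)+1)) ((s:ℤ)+1)
      = insert (-((s:ℤ)+1)) (insert ((s:ℤ)+1) (Finset.Icc (-(s:ℤ)) (s:ℤ))) := by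
    ext x; simp only [Finset.mem_Icc, Finset.mem_insert]; omega
  push_cast
  rw [hset, Finset.sum_insert (by simp only [Finset.mem_insert, Finset.mem_Icc]; push_neg; omega), Finset.sum_insert (by simp only [Finset.mem_Icc]; omega)]
  simp only [pow2]
  ring

lemma chi_formula (s : ℕ) :
    χ s * (β^2 - 1) = (β^2)^((s:ℤ)+1) - (β^2)^(-(s:ℤ)) := by
  induction s with
  | zero => simp [χ]
  | succ n ih =>
    have hAq : (β^2:RatFunc ℚ)^((n:ℤ)+1+1) = (β^2)^((n:ℤ)+1) * β^2 := zpow_add_one₀ q_ne _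
    have hBq : (β^2:RatFunc ℚ)^(-(n:ℤ)) = (β^2)^(-(n:ℤ)-1) * β^2 := by
      rw [← zpow_add_one₀ q_ne]; norm_num
    rw [chi_succ]
    push_cast
    have hneg : -((n:ℤ)+1) = -(n:ℤ)-1 := by ring
    rw [hneg]
    linear_combination ih - hBq - hAq

lemma chi_rec (n : ℕ) : χ (n+2) - (β^2 + (β^2)⁻¹) * χ (n+1) + χ n = 0 := by
  apply mul_right_cancel₀ q_sub_one_ne
  have f2 := chi_formula (n+2)
  have f1 := chi_formula (n+1)
  have f0 := chi_formula n
  push_cast at f2 f1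
  have h1 : ((β^2:RatFunc ℚ))^((n:ℤ)+2+1) = (β^2)^((n:ℤ)+1) * β^2 * β^2 := by
    rw [show ((n:ℤ)+2+1) = ((n:ℤ)+1)+1+1 by ring, zpow_add_one₀ q_ne, zpow_add_one₀ q_ne]
  have h2 : ((β^2:RatFunc ℚ))^((n:ℤ)+1+1) = (β^2)^((n:ℤ)+1) * β^2 := zpow_add_one₀ q_ne _
  have h3 : ((β^2:RatFunc ℚ))^(-((n:ℤ)+1)) = (β^2)^(-((n:ℤ)+2)) * β^2 := by
    rw [show (-((n:ℤ)+1)) = (-((n:ℤ)+2))+1 by ring, zpow_add_one₀ q_ne]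
  have h4 : ((β^2:RatFunc ℚ))^(-(n:ℤ)) = (β^2)^(-((n:ℤ)+2)) * β^2 * β^2 := by
    rw [show (-(n:ℤ)) = (-((n:ℤ)+2))+1+1 by ring, zpow_add_one₀ q_ne, zpow_add_one₀ q_ne]
  have h5 : (β^2:RatFunc ℚ) * (β^2)⁻¹ = 1 := mul_inv_cancel₀ q_ne
  rw [h1] at f2
  rw [h2, h3] at f1
  rw [h4] at f0
  linear_combination f2 - (β^2+(β^2)⁻¹)*f1 + f0
    + ((β^2)^(-((n:ℤ)+2)) - (β^2)^((n:ℤ)+1))*h5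

open PowerSeries

local notation "R" => RatFunc ℚ

lemma chi_zero : χ 0 = 1 := by simp [χ]

lemma chi_one : χ 1 = β^2 + 1 + (β^2)⁻¹ := by
  have : Finset.Icc (-(1:ℤ)) 1 = {-1, 0, 1} := rfl
  simp only [χ, Nat.cast_one, this]
  rw [Finset.sum_insert (by decide), Finset.sum_insert (by decide), Finset.sum_singleton]
  norm_num [inv_pow]
  norm_cast
  ring

lemma key1 : (PowerSeries.mk fun s => χ s) *
    (1 - PowerSeries.C (β^2 + (β^2)⁻¹) * X + X^2) = 1 + X := by
  have expand : (PowerSeries.mk fun s => χ s) *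
      (1 - PowerSeries.C (β^2 + (β^2)⁻¹) * X + X^2)
      = (PowerSeries.mk fun s => χ s)
        - PowerSeries.C (β^2) * ((PowerSeries.mk fun s => χ s) * X)
        - PowerSeries.C ((β^2)⁻¹) * ((PowerSeries.mk fun s => χ s) * X)
        + (PowerSeries.mk fun s => χ s) * X^2 := by rw [map_add]; ring
  rw [expand]
  ext n
  simp only [map_add, map_sub, PowerSeries.coeff_mk, PowerSeries.coeff_C_mul,
    PowerSeries.coeff_mul_X_pow', PowerSeries.coeff_one, PowerSeries.coeff_X]
  match n with
  | 0 => simp [chi_zero, PowerSeries.coeff_zero_mul_X]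
  | 1 =>
    rw [show ((1:ℕ)) = 0 + 1 by rfl, PowerSeries.coeff_succ_mul_X]
    simp [chi_zero, chi_one]
    ring
  | (n+2) =>
    rw [show ((n+2:ℕ)) = (n+1) + 1 by rfl, PowerSeries.coeff_succ_mul_X]
    simp only [PowerSeries.coeff_mk]
    have h := chi_rec n
    simp only [if_pos (by omega : 2 ≤ n + 1 + 1), show n+1+1-2 = n by omega]
    norm_num
    linear_combination h

lemma key2 : (1 - X * PowerSeries.C (β^2)) * (1 - X * PowerSeries.C ((β^2)⁻¹))
    = 1 - PowerSeries.C (β^2 + (β^2)⁻¹) * X + X^2 := by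
  have h : PowerSeries.C (β^2) * PowerSeries.C ((β^2)⁻¹) = 1 := by
    rw [← map_mul, mul_inv_cancel₀ q_ne, map_one]
  rw [map_add]
  linear_combination (X:R⟦X⟧)^2 * h

lemma key3 (ℓ : ℕ) (hℓ : 1 ≤ ℓ) :
    (1 - (X:R⟦X⟧)^2) * (∑ k ∈ Finset.Icc 1 ℓ,
        ((X:R⟦X⟧)^(2*ℓ - 2*k) - X^(2*ℓ + 2*k - 2)))
      = (1 - X^(2*ℓ))^2 := by
  set y : R⟦X⟧ := X^2 with hy
  have hS : (∑ k ∈ Finset.Icc 1 ℓ, ((X:R⟦X⟧)^(2*ℓ - 2*k) - X^(2*ℓ + 2*k - 2)))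
      = (∑ i ∈ Finset.range ℓ, y^i) - y^ℓ * ∑ i ∈ Finset.range ℓ, y^i := by
    rw [← Finset.Ico_add_one_right_eq_Icc, Finset.sum_Ico_eq_sum_range]
    simp only [Nat.add_sub_cancel]
    rw [Finset.sum_sub_distrib]
    congr 1
    · rw [← Finset.sum_range_reflect]
      apply Finset.sum_congr rfl
      intro i hi
      rw [Finset.mem_range] at hi
      rw [hy, ← pow_mul]
      congr 1
      omega
    · rw [Finset.mul_sum]
      apply Finset.sum_congr rfl
      intro i hi
      rw [Finset.mem_range] at hi
      rw [hy, ← pow_mul, ← pow_mul, ← pow_add]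
      congr 1
      omega
  rw [hS]
  have hg : (1 - y) * (∑ i ∈ Finset.range ℓ, y^i) = 1 - y^ℓ := by
    linear_combination -geom_sum_mul y ℓ
  have : (1:R⟦X⟧) - X^(2*ℓ) = 1 - y^ℓ := by rw [hy, ← pow_mul]
  rw [this]
  linear_combination (1 - y^ℓ) * hg

/-- The character form of the generalized Flato–Fronsdal theorem in `d = 3`:
`((1 - x^(2ℓ))/D)² = (Σ_{s≥0} χ_s(β) x^s) · (Σ_{k=1}^{ℓ} (x^(2ℓ-2k) - x^(2ℓ+2k-2)))/D`
in `ℚ(β)[[x]]`, where `D = (1-x)(1-xβ²)(1-xβ⁻²)`. -/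
theorem flato_fronsdal_characters (ℓ : ℕ) (hℓ : 1 ≤ ℓ) :
    ((1 - PowerSeries.X ^ (2 * ℓ))
      * (((1 - PowerSeries.X)
        * (1 - PowerSeries.X * PowerSeries.C (β ^ 2))
        * (1 - PowerSeries.X * PowerSeries.C ((β ^ 2)⁻¹)))⁻¹)) ^ 2
      = (PowerSeries.mk fun s => χ s)
        * ((∑ k ∈ Finset.Icc 1 ℓ,
              (PowerSeries.X ^ (2 * ℓ - 2 * k) - PowerSeries.X ^ (2 * ℓ + 2 * k - 2)))
          * (((1 - PowerSeries.X)
            * (1 - PowerSeries.X * PowerSeries.C (β ^ 2))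
            * (1 - PowerSeries.X * PowerSeries.C ((β ^ 2)⁻¹)))⁻¹)) := by
  set D : R⟦X⟧ := (1 - X) * (1 - X * PowerSeries.C (β^2))
      * (1 - X * PowerSeries.C ((β^2)⁻¹)) with hDdef
  set S : R⟦X⟧ := ∑ k ∈ Finset.Icc 1 ℓ,
      ((X:R⟦X⟧)^(2*ℓ - 2*k) - X^(2*ℓ + 2*k - 2)) with hSdef
  have hc : PowerSeries.constantCoeff D ≠ 0 := by
    rw [hDdef]
    simp
  have hD : D * D⁻¹ = 1 := PowerSeries.mul_inv_cancel _ hc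
  have h12 : (PowerSeries.mk fun s => χ s)
      * ((1 - X * PowerSeries.C (β^2)) * (1 - X * PowerSeries.C ((β^2)⁻¹)))
      = 1 + X := by rw [key2]; exact key1
  have key : (1 - (X:R⟦X⟧)^(2*ℓ))^2 = (PowerSeries.mk fun s => χ s) * S * D := by
    linear_combination -key3 ℓ hℓ - S * (1 - (X:R⟦X⟧)) * h12
  rw [mul_pow, key]
  linear_combination ((PowerSeries.mk fun s => χ s) * S * D⁻¹) * hD
end

section
/- For every positive integer ℓ and integer n ≥ 1, if f : ℝⁿ \ {0} → ℝ is smooth with Δf = 0 and x·∇f = (1 - ℓ - n/2)·f, then Δ^k(|x|^(2ℓ) f) = 0 for every k ≥ 1; in particular |x|^(2ℓ) f lies in the kernel of Δ^ℓ. -/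
open scoped BigOperators

/-- Partial derivative in the `i`-th coordinate direction. -/
noncomputable def pder (n : ℕ) (i : Fin n) (f : (Fin n → ℝ) → ℝ) : (Fin n → ℝ) → ℝ :=
  fun x => fderiv ℝ f x (Pi.single i 1)

/-- The Euclidean Laplacian `Δf = Σᵢ ∂ᵢ∂ᵢ f` on `ℝⁿ`. -/
noncomputable def lap (n : ℕ) (f : (Fin n → ℝ) → ℝ) : (Fin n → ℝ) → ℝ :=
  fun x => ∑ i, pder n i (pder n i f) x

/-- The Euler operator `x·∇f = Σᵢ xᵢ ∂ᵢ f` on `ℝⁿ`. -/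
noncomputable def euler (n : ℕ) (f : (Fin n → ℝ) → ℝ) : (Fin n → ℝ) → ℝ :=
  fun x => ∑ i, x i * pder n i f x

lemma my_pow {E : Type*} [NormedAddCommGroup E] [NormedSpace ℝ E]
    {c : E → ℝ} {c' : E →L[ℝ] ℝ} {x : E} (h : HasFDerivAt c c' x) (m : ℕ) :
    HasFDerivAt (fun y => c y ^ m) (((m : ℝ) * c x ^ (m - 1)) • c') x := by
  induction m with
  | zero => simpa using hasFDerivAt_const 1 x
  | succ m ih =>
    have h2 := ih.fun_mul h
    have hfe : (fun y => c y ^ (m + 1)) = fun y => c y ^ m * c y := by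
      ext y; rw [pow_succ]
    rw [hfe]
    refine h2.congr_fderiv ?_
    ext y
    simp only [ContinuousLinearMap.add_apply, ContinuousLinearMap.smul_apply, smul_eq_mul,
      Nat.add_sub_cancel, Nat.cast_add, Nat.cast_one]
    cases m with
    | zero => simp
    | succ k =>
      simp only [Nat.add_sub_cancel]
      rw [pow_succ]
      ring

lemma proj_hasFDerivAt {n : ℕ} (i : Fin n) (x : Fin n → ℝ) :
    HasFDerivAt (fun y : Fin n → ℝ => y i)
      (ContinuousLinearMap.proj i : (Fin n → ℝ) →L[ℝ] ℝ) x :=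
  (ContinuousLinearMap.proj i : (Fin n → ℝ) →L[ℝ] ℝ).hasFDerivAt

lemma q_hasFDerivAt {n : ℕ} (x : Fin n → ℝ) :
    HasFDerivAt (fun y : Fin n → ℝ => ∑ j, y j ^ 2)
      (∑ j, ((2 : ℝ) * x j) • (ContinuousLinearMap.proj j : (Fin n → ℝ) →L[ℝ] ℝ)) x := by
  have h : ∀ j : Fin n, HasFDerivAt (fun y : Fin n → ℝ => y j ^ 2)
      (((2 : ℝ) * x j) • (ContinuousLinearMap.proj j : (Fin n → ℝ) →L[ℝ] ℝ)) x := by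
    intro j
    have h2 := my_pow (proj_hasFDerivAt j x) 2
    refine h2.congr_fderiv ?_
    ext v; simp
  exact HasFDerivAt.fun_sum (fun j _ => h j)

lemma Q_apply {n : ℕ} (x : Fin n → ℝ) (i : Fin n) :
    (∑ j, ((2 : ℝ) * x j) • (ContinuousLinearMap.proj j : (Fin n → ℝ) →L[ℝ] ℝ))
      (Pi.single i 1) = 2 * x i := by
  simp [ContinuousLinearMap.sum_apply, Pi.single_apply, Finset.sum_ite_eq', mul_ite]

lemma pder_of_hasFDerivAt {n : ℕ} {i : Fin n} {f : (Fin n → ℝ) → ℝ} {x : Fin n → ℝ}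
    {L : (Fin n → ℝ) →L[ℝ] ℝ} (h : HasFDerivAt f L x) :
    pder n i f x = L (Pi.single i 1) := by
  unfold pder; rw [h.fderiv]

lemma pder_congr_nhds {n : ℕ} {i : Fin n} {f g : (Fin n → ℝ) → ℝ} {x : Fin n → ℝ}
    (h : f =ᶠ[nhds x] g) : pder n i f x = pder n i g x := by
  unfold pder; rw [h.fderiv_eq]

lemma pder_contDiffAt {n : ℕ} {i : Fin n} {f : (Fin n → ℝ) → ℝ} {x : Fin n → ℝ}
    (hf : ContDiffAt ℝ (⊤ : ℕ∞) f x) : ContDiffAt ℝ (⊤ : ℕ∞) (pder n i f) x := by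
  have h1 : ContDiffAt ℝ (⊤ : ℕ∞) (fderiv ℝ f) x := hf.fderiv_right (by simp)
  exact h1.clm_apply contDiffAt_const

lemma coeff_pow_helper (m : ℕ) (r : ℝ) : (m : ℝ) * r ^ (m - 1) * r = (m : ℝ) * r ^ m := by
  cases m with
  | zero => simp
  | succ k =>
    simp only [Nat.add_sub_cancel]
    rw [pow_succ]
    ring

lemma lap_locally_zero {n : ℕ} {F : (Fin n → ℝ) → ℝ} {s : Set (Fin n → ℝ)} (hs : IsOpen s)
    (h : ∀ y ∈ s, F y = 0) {x : Fin n → ℝ} (hx : x ∈ s) : lap n F x = 0 := by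
  have hp : ∀ i : Fin n, ∀ y ∈ s, pder n i F y = 0 := by
    intro i y hy
    have hev : F =ᶠ[nhds y] (fun _ => 0) := by
      filter_upwards [hs.mem_nhds hy] with w hw; exact h w hw
    rw [pder_congr_nhds hev]
    simp [pder]
  show ∑ i, pder n i (pder n i F) x = 0
  refine Finset.sum_eq_zero fun i _ => ?_
  have hev : pder n i F =ᶠ[nhds x] (fun _ => 0) := by
    filter_upwards [hs.mem_nhds hx] with w hw; exact hp i w hw
  rw [pder_congr_nhds hev]
  simp [pder]

/-- If `f` is smooth on `ℝⁿ \ {0}`, harmonic, and Euler-homogeneous of degree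
`a = 1 - ℓ - n/2`, then `Δ^k(|x|^(2ℓ) f) = 0` on `ℝⁿ \ {0}` for every `k ≥ 1`;
in particular `|x|^(2ℓ) f` lies in the kernel of `Δ^ℓ`. -/
theorem subleading_branch_polyharmonic (n ℓ : ℕ) (hn : 1 ≤ n) (hℓ : 1 ≤ ℓ)
    (f : (Fin n → ℝ) → ℝ)
    (hf : ∀ x : Fin n → ℝ, x ≠ 0 → ContDiffAt ℝ (⊤ : ℕ∞) f x)
    (hharm : ∀ x : Fin n → ℝ, x ≠ 0 → lap n f x = 0)
    (hhom : ∀ x : Fin n → ℝ, x ≠ 0 →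
      euler n f x = (1 - (ℓ : ℝ) - (n : ℝ) / 2) * f x) :
    ∀ k : ℕ, 1 ≤ k → ∀ x : Fin n → ℝ, x ≠ 0 →
      (lap n)^[k] (fun y => (∑ i, y i ^ 2) ^ ℓ * f y) x = 0 := by
  classical
  obtain ⟨m, rfl⟩ : ∃ m, ℓ = m + 1 := ⟨ℓ - 1, (Nat.succ_pred_eq_of_pos hℓ).symm⟩
  set ℓ := m + 1 with hℓdef
  set g : (Fin n → ℝ) → ℝ := fun y => (∑ i, y i ^ 2) ^ ℓ * f y with hgdef
  -- open set of nonzero points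
  have hopen : IsOpen {y : Fin n → ℝ | y ≠ 0} := isOpen_compl_singleton
  -- first derivative of g off the origin
  have hA : ∀ z : Fin n → ℝ, z ≠ 0 → ∀ i : Fin n,
      pder n i g z = (∑ j, z j ^ 2) ^ ℓ * pder n i f z
        + f z * (((ℓ : ℝ) * (∑ j, z j ^ 2) ^ (ℓ - 1)) * (2 * z i)) := by
    intro z hz i
    have hfz : HasFDerivAt f (fderiv ℝ f z) z :=
      (((hf z hz).differentiableAt (by simp))).hasFDerivAt
    have hqℓ := my_pow (q_hasFDerivAt z) ℓ
    have h := hqℓ.fun_mul hfz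
    rw [pder_of_hasFDerivAt h]
    simp only [ContinuousLinearMap.add_apply, ContinuousLinearMap.smul_apply, smul_eq_mul,
      Q_apply, pder]
  -- second derivative computation
  have hB : ∀ x : Fin n → ℝ, x ≠ 0 → ∀ i : Fin n,
      pder n i (pder n i g) x
        = (∑ j, x j ^ 2) ^ ℓ * pder n i (pder n i f) x
          + pder n i f x * (((ℓ : ℝ) * (∑ j, x j ^ 2) ^ (ℓ - 1)) * (2 * x i))
          + (f x * ((((ℓ : ℝ) * (∑ j, x j ^ 2) ^ (ℓ - 1)) * 2)
              + (2 * x i) * ((ℓ : ℝ) * (((ℓ - 1 : ℕ) : ℝ)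
                  * (∑ j, x j ^ 2) ^ (ℓ - 1 - 1) * (2 * x i))))
            + (((ℓ : ℝ) * (∑ j, x j ^ 2) ^ (ℓ - 1)) * (2 * x i)) * pder n i f x) := by
    intro x hx i
    have hev : pder n i g =ᶠ[nhds x] (fun y =>
        (∑ j, y j ^ 2) ^ ℓ * pder n i f y
          + f y * (((ℓ : ℝ) * (∑ j, y j ^ 2) ^ (ℓ - 1)) * (2 * y i))) := by
      filter_upwards [hopen.mem_nhds hx] with z hz
      exact hA z hz i
    rw [pder_congr_nhds hev]
    -- build derivative of the explicit formula
    have hfx : HasFDerivAt f (fderiv ℝ f x) x :=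
      (((hf x hx).differentiableAt (by simp))).hasFDerivAt
    have hui : HasFDerivAt (pder n i f) (fderiv ℝ (pder n i f) x) x :=
      ((pder_contDiffAt (hf x hx)).differentiableAt (by simp)).hasFDerivAt
    have t1 := (my_pow (q_hasFDerivAt x) ℓ).fun_mul hui
    have inner1 := (my_pow (q_hasFDerivAt x) (ℓ - 1)).const_mul (ℓ : ℝ)
    have inner2 := (proj_hasFDerivAt i x).const_mul (2 : ℝ)
    have inner := inner1.fun_mul inner2
    have t2 := hfx.fun_mul inner
    have tot := t1.fun_add t2
    rw [pder_of_hasFDerivAt tot]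
    simp only [ContinuousLinearMap.add_apply, ContinuousLinearMap.smul_apply, smul_eq_mul,
      Q_apply, ContinuousLinearMap.proj_apply, Pi.single_eq_same, pder]
    ring
  -- the Laplacian of g vanishes off the origin
  have key : ∀ x : Fin n → ℝ, x ≠ 0 → lap n g x = 0 := by
    intro x hx
    set r : ℝ := ∑ j, x j ^ 2 with hr
    have hcast : ((ℓ - 1 : ℕ) : ℝ) = (m : ℝ) := by simp [hℓdef]
    have hsub : ℓ - 1 = m := by simp [hℓdef]
    have hlap : lap n g x = ∑ i, (r ^ ℓ * pder n i (pder n i f) x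
        + (4 * (ℓ : ℝ) * r ^ m) * (x i * pder n i f x)
        + f x * (2 * (ℓ : ℝ) * r ^ m)
        + (f x * (4 * (ℓ : ℝ) * ((m : ℝ) * r ^ (m - 1)))) * (x i * x i)) := by
      unfold lap
      refine Finset.sum_congr rfl fun i _ => ?_
      rw [hB x hx i]
      rw [hcast, hsub]
      ring
    rw [hlap]
    have h1 : ∑ i, pder n i (pder n i f) x = 0 := hharm x hx
    have h2 : ∑ i, x i * pder n i f x = (1 - (ℓ : ℝ) - (n : ℝ) / 2) * f x := hhom x hx
    have h3 : ∑ i, x i * x i = r := by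
      rw [hr]; exact Finset.sum_congr rfl fun i _ => (pow_two (x i)).symm
    have hsplit : ∑ i : Fin n, (r ^ ℓ * pder n i (pder n i f) x
        + (4 * (ℓ : ℝ) * r ^ m) * (x i * pder n i f x)
        + f x * (2 * (ℓ : ℝ) * r ^ m)
        + (f x * (4 * (ℓ : ℝ) * ((m : ℝ) * r ^ (m - 1)))) * (x i * x i))
        = r ^ ℓ * (∑ i, pder n i (pder n i f) x)
          + (4 * (ℓ : ℝ) * r ^ m) * (∑ i, x i * pder n i f x)
          + (n : ℝ) * (f x * (2 * (ℓ : ℝ) * r ^ m))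
          + (f x * (4 * (ℓ : ℝ) * ((m : ℝ) * r ^ (m - 1)))) * (∑ i, x i * x i) := by
      rw [Finset.sum_add_distrib, Finset.sum_add_distrib, Finset.sum_add_distrib,
        Finset.mul_sum Finset.univ (fun i => pder n i (pder n i f) x) (r ^ ℓ) |>.symm]
      rw [Finset.mul_sum Finset.univ (fun i => x i * pder n i f x)
        (4 * (ℓ : ℝ) * r ^ m) |>.symm]
      rw [Finset.mul_sum Finset.univ (fun i => x i * x i)
        (f x * (4 * (ℓ : ℝ) * ((m : ℝ) * r ^ (m - 1)))) |>.symm]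
      rw [Finset.sum_const, Finset.card_univ, Fintype.card_fin, nsmul_eq_mul]
    rw [hsplit, h1, h2, h3]
    have hℓcast : (ℓ : ℝ) = (m : ℝ) + 1 := by simp [hℓdef]
    rw [hℓcast]
    linear_combination (4 * ((m : ℝ) + 1) * f x) * coeff_pow_helper m r
  -- conclude for all iterates
  have keyk : ∀ k : ℕ, ∀ x : Fin n → ℝ, x ≠ 0 → (lap n)^[k + 1] g x = 0 := by
    intro k
    induction k with
    | zero => intro x hx; simpa using key x hx
    | succ k ih =>
      intro x hx
      rw [Function.iterate_succ_apply']
      exact lap_locally_zero hopen (fun y hy => ih y hy) hx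
  intro k hk x hx
  obtain ⟨k', rfl⟩ : ∃ k', k = k' + 1 := ⟨k - 1, (Nat.succ_pred_eq_of_pos hk).symm⟩
  exact keyk k' x hx
end
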